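/- If ‖F‖₂ < 1/10, then for any diagonal matrix D, ‖Δ₂(F,D)‖₂ ≤ (1/2)·‖D‖₂·‖F‖₂ ≤ (1/20)·‖D‖₂. -/
import Mathlib

open Matrix

noncomputable def sn {n : Type*} [Fintype n] [DecidableEq n] (M : Matrix n n ℝ) : ℝ :=
  ‖Matrix.toEuclideanCLM (𝕜 := ℝ) (n := n) M‖

noncomputable def Delta {n : Type*} [Fintype n] [DecidableEq n] (E : Matrix n n ℝ) : Matrix n n ℝ :=
  (1 + E)⁻¹ - 1 + E

noncomputable def Delta1 {n : Type*} [Fintype n] [DecidableEq n] (E : Matrix n n ℝ) : Matrix n n ℝ :=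
  Delta E + (Delta E)ᵀ + (E - Delta E)ᵀ * (E - Delta E)

noncomputable def Delta2 {n : Type*} [Fintype n] [DecidableEq n] (E D : Matrix n n ℝ) : Matrix n n ℝ :=
  -(D * Delta E) - (D * Delta E)ᵀ - (E - Delta E)ᵀ * D * (E - Delta E)

noncomputable def DDelta {n : Type*} [Fintype n] [DecidableEq n] (F H : Matrix n n ℝ) : Matrix n n ℝ :=
  ∑' k : ℕ, ((-1 : ℝ)^(k+2)) • ∑ l ∈ Finset.range (k+2), F^l * H * F^(k+1-l)

noncomputable def frob {n : Type*} [Fintype n] (M : Matrix n n ℝ) : ℝ :=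
  Real.sqrt (∑ i, ∑ j, (M i j)^2)

section aux

variable {n : Type*} [Fintype n] [DecidableEq n]

lemma sn_transpose (M : Matrix n n ℝ) : sn (Mᵀ) = sn M := by
  unfold sn
  have h : Matrix.toEuclideanCLM (𝕜 := ℝ) (n := n) (Mᵀ)
      = star (Matrix.toEuclideanCLM (𝕜 := ℝ) (n := n) M) := by
    rw [← map_star]; congr 1
  rw [h, ContinuousLinearMap.star_eq_adjoint]
  exact (ContinuousLinearMap.adjoint :
    (EuclideanSpace ℝ n →L[ℝ] EuclideanSpace ℝ n) ≃ₗᵢ⋆[ℝ] _).norm_map _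

end aux

set_option maxHeartbeats 1600000 in
theorem stmt7 {n : Type*} [Fintype n] [DecidableEq n] (F D : Matrix n n ℝ) (hF : sn F < 1/10) (hD : D.IsDiag) :
    sn (Delta2 F D) ≤ (1/2) * sn D * sn F ∧ (1/2) * sn D * sn F ≤ (1/20) * sn D := by
  classical
  set e := Matrix.toEuclideanCLM (𝕜 := ℝ) (n := n) with he
  set a := e F with ha
  set d := e D with hd
  have hf0 : (0:ℝ) ≤ ‖a‖ := norm_nonneg _
  have hf : ‖a‖ < 1/10 := hF
  have hfa : ‖(-a)‖ < 1 := by rw [norm_neg]; linarith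
  -- the unit 1 + a
  set u : (EuclideanSpace ℝ n →L[ℝ] EuclideanSpace ℝ n)ˣ := Units.oneSub (-a) hfa with hu
  have huval : (u : EuclideanSpace ℝ n →L[ℝ] EuclideanSpace ℝ n) = 1 + a := by
    simp [hu, sub_neg_eq_add]
  set b : EuclideanSpace ℝ n →L[ℝ] EuclideanSpace ℝ n := ↑u⁻¹ with hb
  have hbu : b * (1 + a) = 1 := by rw [← huval]; exact u.inv_mul
  have hub : (1 + a) * b = 1 := by rw [← huval]; exact u.mul_inv
  -- norm bound on b
  have hnorm1 : ‖(1 : EuclideanSpace ℝ n →L[ℝ] EuclideanSpace ℝ n)‖ ≤ 1 := by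
    rw [ContinuousLinearMap.one_def]; exact ContinuousLinearMap.norm_id_le
  have hbnorm : ‖b‖ ≤ (1 - ‖a‖)⁻¹ := by
    have : b = ∑' k : ℕ, (-a) ^ k := rfl
    rw [this]
    have := tsum_geometric_le_of_norm_lt_one (-a) hfa
    rw [norm_neg] at this
    linarith
  have hbf : ‖b‖ * (1 - ‖a‖) ≤ 1 := by
    have h1 : (0:ℝ) < 1 - ‖a‖ := by linarith
    calc ‖b‖ * (1 - ‖a‖) ≤ (1 - ‖a‖)⁻¹ * (1 - ‖a‖) :=
          mul_le_mul_of_nonneg_right hbnorm (le_of_lt h1)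
      _ = 1 := inv_mul_cancel₀ (ne_of_gt h1)
  -- e of the matrix inverse
  have hunit : IsUnit (1 + F) := by
    have h1 : IsUnit (1 + a) := by
      have := isUnit_one_sub_of_norm_lt_one hfa
      rwa [sub_neg_eq_add] at this
    have h2 : IsUnit (e.symm (1 + a)) := by
      exact h1.map (e.symm : (EuclideanSpace ℝ n →L[ℝ] EuclideanSpace ℝ n) ≃+* Matrix n n ℝ)
    simpa [ha, map_add] using h2
  have hinv : e ((1 + F)⁻¹) = b := by
    have h1 : (1 + F) * (1 + F)⁻¹ = 1 := Matrix.mul_nonsing_inv _ (Matrix.isUnit_iff_isUnit_det _ |>.mp hunit)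
    have h2 : (1 + a) * e ((1 + F)⁻¹) = 1 := by
      have := congrArg e h1
      simpa [_root_.map_mul, map_add, _root_.map_one, ha] using this
    calc e ((1 + F)⁻¹) = (b * (1 + a)) * e ((1 + F)⁻¹) := by rw [hbu, one_mul]
      _ = b * ((1 + a) * e ((1 + F)⁻¹)) := mul_assoc _ _ _
      _ = b := by rw [h2, mul_one]
  -- images of Delta and F - Delta
  have hDelta : e (Delta F) = b * (a * a) := by
    have e1 : e (Delta F) = b - 1 + a := by
      unfold Delta
      rw [map_add, map_sub, hinv, _root_.map_one]
    have e2 : b * (a * a) = b * ((1 + a) * a) - b * (1 + a) + b := by noncomm_ring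
    have e3 : b * ((1 + a) * a) = a := by rw [← mul_assoc, hbu, one_mul]
    rw [e1, e2, e3, hbu]
    abel
  have hC : e (F - Delta F) = b * a := by
    have e1 : e (F - Delta F) = 1 - b := by
      unfold Delta
      rw [map_sub, map_add, map_sub, hinv, _root_.map_one]
      abel
    have e2 : b * a = b * (1 + a) - b := by noncomm_ring
    rw [e1, e2, hbu]
  -- norms
  have hstar : ∀ M : Matrix n n ℝ, e (Mᵀ) = star (e M) := fun M => by
    rw [← map_star]; congr 1
  have hnormstar : ∀ x : EuclideanSpace ℝ n →L[ℝ] EuclideanSpace ℝ n, ‖star x‖ = ‖x‖ := by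
    intro x
    rw [ContinuousLinearMap.star_eq_adjoint]
    exact (ContinuousLinearMap.adjoint :
      (EuclideanSpace ℝ n →L[ℝ] EuclideanSpace ℝ n) ≃ₗᵢ⋆[ℝ] _).norm_map x
  have h2img : e (Delta2 F D) =
      -(d * (b * (a * a))) - star (d * (b * (a * a))) - star (b * a) * d * (b * a) := by
    unfold Delta2
    rw [map_sub, map_sub, map_neg, _root_.map_mul, _root_.map_mul, _root_.map_mul, hstar, hstar, _root_.map_mul, hDelta, hC, hd]
  have key : sn (Delta2 F D) ≤ 2 * (‖d‖ * (‖b‖ * (‖a‖ * ‖a‖))) + ‖b‖ * ‖a‖ * ‖d‖ * (‖b‖ * ‖a‖) := by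
    have : sn (Delta2 F D) = ‖e (Delta2 F D)‖ := rfl
    rw [this, h2img]
    have t1 : ‖d * (b * (a * a))‖ ≤ ‖d‖ * (‖b‖ * (‖a‖ * ‖a‖)) :=
      le_trans (norm_mul_le _ _) (by
        gcongr
        exact le_trans (norm_mul_le _ _) (by gcongr; exact norm_mul_le _ _))
    have t2 : ‖star (b * a) * d * (b * a)‖ ≤ ‖b‖ * ‖a‖ * ‖d‖ * (‖b‖ * ‖a‖) := by
      calc ‖star (b * a) * d * (b * a)‖ ≤ ‖star (b * a) * d‖ * ‖b * a‖ := norm_mul_le _ _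
        _ ≤ ‖star (b * a)‖ * ‖d‖ * ‖b * a‖ := by gcongr; exact norm_mul_le _ _
        _ = ‖b * a‖ * ‖d‖ * ‖b * a‖ := by rw [hnormstar]
        _ ≤ ‖b‖ * ‖a‖ * ‖d‖ * (‖b‖ * ‖a‖) := by
            gcongr <;> first | exact norm_mul_le _ _ | exact norm_nonneg _
    calc ‖-(d * (b * (a * a))) - star (d * (b * (a * a))) - star (b * a) * d * (b * a)‖
        ≤ ‖-(d * (b * (a * a))) - star (d * (b * (a * a)))‖ + ‖star (b * a) * d * (b * a)‖ :=
          norm_sub_le _ _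
      _ ≤ ‖-(d * (b * (a * a)))‖ + ‖star (d * (b * (a * a)))‖ + ‖star (b * a) * d * (b * a)‖ := by
          gcongr; exact norm_sub_le _ _
      _ = ‖d * (b * (a * a))‖ + ‖d * (b * (a * a))‖ + ‖star (b * a) * d * (b * a)‖ := by
          rw [norm_neg, hnormstar]
      _ ≤ 2 * (‖d‖ * (‖b‖ * (‖a‖ * ‖a‖))) + ‖b‖ * ‖a‖ * ‖d‖ * (‖b‖ * ‖a‖) := by linarith
  have hd0 : (0:ℝ) ≤ ‖d‖ := norm_nonneg _
  have hb0 : (0:ℝ) ≤ ‖b‖ := norm_nonneg _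
  have hsnD : sn D = ‖d‖ := rfl
  have hsnF : sn F = ‖a‖ := rfl
  constructor
  · rw [hsnD, hsnF]
    refine le_trans key ?_
    nlinarith [mul_nonneg hd0 hf0, mul_nonneg hb0 hf0, mul_nonneg (mul_nonneg hd0 hf0) hb0,
      mul_nonneg (mul_nonneg (mul_nonneg hd0 hf0) hb0) hb0, sq_nonneg (‖b‖ * ‖a‖)]
  · rw [hsnD, hsnF]
    nlinarith
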